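/- Let L ⊂ ℝⁿ be a full-rank lattice with basis matrix B ∈ ℝ^{n×n}, let 0 < α < 1/2, and let p be a positive integer with p·α > 1. Then there exists s ∈ {0,1,…,p−1}ⁿ such that dist(Bs/p, L) < α·λ1(L) and the vector y = Bs − p·c, where c ∈ L is the unique closest lattice point to Bs/p, is a nonzero lattice vector with ‖y‖ = λ1(L). That is, the enumeration over all pⁿ coset representatives (with target t = 0) produces a shortest nonzero vector of L. -/

import Mathlib

/-! Let `v = B c₀` be a shortest nonzero lattice vector. Reducing `c₀` modulo `p` gives digits
`s ∈ {0,…,p−1}ⁿ` with `Bs = v + p • c` for a lattice point `c`, so `Bs / p` lies at distance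
`λ₁ / p < α λ₁` from `c`. As `p > 2`, this is less than `λ₁ / 2`, which makes `c` the unique closest
lattice point, and `Bs − p • c = v`. -/

open Matrix

def latticeHom {m ι : Type*} [Fintype ι] (B : Matrix m ι ℝ) : (ι → ℤ) →+ EuclideanSpace ℝ m where
  toFun c := WithLp.toLp 2 (B *ᵥ fun j => (c j : ℝ))
  map_zero' := by ext; simp [mulVec, dotProduct]
  map_add' c d := by ext; simp [mulVec, dotProduct, mul_add, Finset.sum_add_distrib]

theorem latticeHom_apply {m ι : Type*} [Fintype ι] (B : Matrix m ι ℝ) (c : ι → ℤ) (i : m) :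
    latticeHom B c i = ∑ j, B i j * c j := rfl

theorem setOf_eq_range_latticeHom {m ι : Type*} [Fintype ι] (B : Matrix m ι ℝ) :
    {v : EuclideanSpace ℝ m | ∃ c : ι → ℤ, ∀ i, v i = ∑ j, B i j * (c j : ℝ)} =
      (latticeHom B).range := by
  ext v
  simp only [Set.mem_ofPred_eq, SetLike.mem_coe, AddMonoidHom.mem_range]
  refine exists_congr fun c => ⟨fun h => ?_, fun h i => ?_⟩
  · ext i; rw [latticeHom_apply, h]
  · rw [← h, latticeHom_apply]

theorem exists_digits_eq_add_nsmul {ι E : Type*} [AddCommGroup E] (f : (ι → ℤ) →+ E)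
    {p : ℕ} (hp : 0 < p) (c : ι → ℤ) :
    ∃ s : ι → ℕ, (∀ i, s i < p) ∧ ∃ k, f (fun i => (s i : ℤ)) = f c + p • f k := by
  have hpZ : (0 : ℤ) < p := by exact_mod_cast hp
  refine ⟨fun i => (c i % p).toNat, fun i => ?_, -fun i => c i / p, ?_⟩
  · have := Int.emod_lt_of_pos (c i) hpZ
    show (c i % p).toNat < p
    omega
  · rw [← map_nsmul, ← map_add]
    congr 1
    ext i
    show ((c i % p).toNat : ℤ) = c i + p • -(c i / p)
    rw [Int.toNat_of_nonneg (Int.emod_nonneg _ hpZ.ne'), Int.emod_def, nsmul_eq_mul]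
    ring

theorem closest_unique_of_two_mul_norm_lt {E : Type*} [SeminormedAddCommGroup E]
    {L : AddSubgroup E} {lam : ℝ} (hmin : ∀ z ∈ L, z ≠ 0 → lam ≤ ‖z‖) {c t : E} (hc : c ∈ L)
    (h : 2 * ‖c - t‖ < lam) : ∀ z ∈ L, z ≠ c → ‖c - t‖ < ‖z - t‖ := by
  intro z hz hzc
  have hmin' : lam ≤ ‖z - c‖ := hmin _ (L.sub_mem hz hc) (sub_ne_zero.mpr hzc)
  have := norm_sub_le_norm_sub_add_norm_sub z t c
  rw [norm_sub_rev t c] at this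
  linarith

theorem enum_finds_shortest_vector_general {n : ℕ}
    (B : Matrix (Fin n) (Fin n) ℝ)
    (L : Set (EuclideanSpace ℝ (Fin n)))
    (hL : L = {v | ∃ c : Fin n → ℤ, ∀ i, v i = ∑ j, B i j * (c j : ℝ)})
    (lam : ℝ)
    (hlam : IsLeast {r : ℝ | ∃ x ∈ L, x ≠ 0 ∧ ‖x‖ = r} lam)
    (α : ℝ) (hα : α < 1 / 2)
    (p : ℕ) (hpα : 1 < (p : ℝ) * α) :
    ∃ s : Fin n → ℕ, (∀ i, s i < p) ∧
      ∀ Bs : EuclideanSpace ℝ (Fin n), (∀ i, Bs i = ∑ j, B i j * (s j : ℝ)) →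
        Metric.infDist ((p : ℝ)⁻¹ • Bs) L < α * lam ∧
        ∃ c ∈ L,
          (∀ z ∈ L, z ≠ c →
            ‖c - (p : ℝ)⁻¹ • Bs‖ < ‖z - (p : ℝ)⁻¹ • Bs‖) ∧
          (Bs - (p : ℝ) • c ∈ L ∧ Bs - (p : ℝ) • c ≠ 0 ∧
            ‖Bs - (p : ℝ) • c‖ = lam) := by
  rw [setOf_eq_range_latticeHom] at hL
  subst hL
  obtain ⟨⟨v, hv, hv0, rfl⟩, hmin⟩ := hlam
  have hp2 : (2 : ℝ) < p := by nlinarith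
  have hp : 0 < p := by exact_mod_cast two_pos.trans hp2
  obtain ⟨c₀, rfl⟩ := hv
  obtain ⟨s, hs, k, hsk⟩ := exists_digits_eq_add_nsmul (latticeHom B) hp c₀
  refine ⟨s, hs, fun Bs hBs => ?_⟩
  set v := latticeHom B c₀
  set c := latticeHom B k
  have hBs_eq : Bs = v + (p : ℝ) • c := by
    rw [Nat.cast_smul_eq_nsmul, ← hsk]
    ext i
    rw [hBs, latticeHom_apply]
    push_cast
    rfl
  have hdist : ‖c - (p : ℝ)⁻¹ • Bs‖ = ‖v‖ / p := by
    rw [hBs_eq, smul_add, inv_smul_smul₀ (by positivity), sub_add_cancel_right, norm_neg, norm_smul,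
      norm_inv, Real.norm_natCast, inv_mul_eq_div]
  have hv_pos : 0 < ‖v‖ := norm_pos_iff.mpr hv0
  have hdist_lt : ‖v‖ / p < α * ‖v‖ := by
    rw [div_lt_iff₀ (by positivity)]
    nlinarith
  refine ⟨?_, c, ⟨k, rfl⟩, ?_, ?_⟩
  · calc Metric.infDist ((p : ℝ)⁻¹ • Bs) (latticeHom B).range
        ≤ ‖c - (p : ℝ)⁻¹ • Bs‖ := by
          rw [← dist_eq_norm, dist_comm]; exact Metric.infDist_le_dist_of_mem ⟨k, rfl⟩
      _ = ‖v‖ / p := hdist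
      _ < α * ‖v‖ := hdist_lt
  · refine closest_unique_of_two_mul_norm_lt (fun z hz hz0 => hmin ⟨z, hz, hz0, rfl⟩) ⟨k, rfl⟩ ?_
    rw [hdist]
    nlinarith
  · rw [hBs_eq, add_sub_cancel_right]
    exact ⟨⟨c₀, rfl⟩, hv0, rfl⟩

/-- Solving SVP by enumeration: for a full-rank lattice `L` with basis
matrix `B`, `0 < α < 1/2` and a positive integer `p` with `p·α > 1`, there exists
`s ∈ {0,…,p−1}ⁿ` such that `dist(Bs/p, L) < α·λ₁(L)` and, with `c` the unique closest
lattice point to `Bs/p`, the vector `y = Bs − p·c` is a nonzero lattice vector of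
norm `λ₁(L)`. -/
theorem enum_finds_shortest_vector {n : ℕ}
    (B : Matrix (Fin n) (Fin n) ℝ) (hB : IsUnit B.det)
    (L : Set (EuclideanSpace ℝ (Fin n)))
    (hL : L = {v | ∃ c : Fin n → ℤ, ∀ i, v i = ∑ j, B i j * (c j : ℝ)})
    (lam : ℝ)
    (hlam : IsLeast {r : ℝ | ∃ x ∈ L, x ≠ 0 ∧ ‖x‖ = r} lam)
    (α : ℝ) (hα0 : 0 < α) (hα : α < 1 / 2)
    (p : ℕ) (hp : 0 < p) (hpα : 1 < (p : ℝ) * α) :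
    ∃ s : Fin n → ℕ, (∀ i, s i < p) ∧
      ∀ Bs : EuclideanSpace ℝ (Fin n), (∀ i, Bs i = ∑ j, B i j * (s j : ℝ)) →
        Metric.infDist ((p : ℝ)⁻¹ • Bs) L < α * lam ∧
        ∃ c ∈ L,
          (∀ z ∈ L, z ≠ c →
            ‖c - (p : ℝ)⁻¹ • Bs‖ < ‖z - (p : ℝ)⁻¹ • Bs‖) ∧
          (Bs - (p : ℝ) • c ∈ L ∧ Bs - (p : ℝ) • c ≠ 0 ∧
            ‖Bs - (p : ℝ) • c‖ = lam) :=
  enum_finds_shortest_vector_general B L hL lam hlam α hα p hpα
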